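/- Let G be a connected simple graph on n ≥ 2 vertices, let j be a vertex, and let U_j be an invertible 2×2 complex matrix such that the local operator acting as U_j on qubit j and as the identity on all other qubits satisfies (𝟙⊗…⊗U_j⊗…⊗𝟙)|G⟩ = c|G⟩ for some c ∈ ℂ. Then U_j is proportional to the 2×2 identity matrix. -/

import Mathlib

open Matrix
open scoped Classical

noncomputable section

/-- The state space of `n` qubits. -/
abbrev QState (n : ℕ) := (Fin n → Fin 2) → ℂ

/-- Single-qubit operators. -/
abbrev Mat2 := Matrix (Fin 2) (Fin 2) ℂ

/-- Operators on `n` qubits. -/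
abbrev MatQ (n : ℕ) := Matrix (Fin n → Fin 2) (Fin n → Fin 2) ℂ

/-- Pauli X. -/
def PX : Mat2 := !![0, 1; 1, 0]

/-- Pauli Y. -/
def PY : Mat2 := !![0, -Complex.I; Complex.I, 0]

/-- Pauli Z. -/
def PZ : Mat2 := !![1, 0; 0, -1]

/-- The Kronecker (tensor) product `A₁ ⊗ ⋯ ⊗ A_n` of single-qubit operators. -/
def localOp {n : ℕ} (A : Fin n → Mat2) : MatQ n := fun x y => ∏ j, A j (x j) (y j)

/-- The single-qubit Pauli group `P₁ = ⟨X, Y, Z⟩`. -/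
def P1 : Submonoid Mat2 := Submonoid.closure {PX, PY, PZ}

/-- The `n`-qubit Pauli group: generated by `n`-fold tensor products of `1, X, Y, Z`. -/
def PN (n : ℕ) : Submonoid (MatQ n) :=
  Submonoid.closure
    { M | ∃ A : Fin n → Mat2, (∀ j, A j = 1 ∨ A j = PX ∨ A j = PY ∨ A j = PZ) ∧ M = localOp A }

/-- Membership in the single-qubit Clifford group `C₁`. -/
def IsClifford1 (U : Mat2) : Prop :=
  U ∈ Matrix.unitaryGroup (Fin 2) ℂ ∧ ∀ σ ∈ P1, U * σ * Uᴴ ∈ P1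

/-- `C₁³`: single-qubit Clifford operators of order `3`. -/
def IsC13 (U : Mat2) : Prop := IsClifford1 U ∧ U ^ 3 = 1 ∧ U ≠ 1

/-- The matrix exponential `e^{iασ}`. -/
def uexp (α : ℝ) (σ : Mat2) : Mat2 := NormedSpace.exp ((Complex.I * (α : ℂ)) • σ)

/-- `A` is proportional to `B` (by a nonzero scalar). -/
def PropTo {α : Type*} [SMul ℂ α] (A B : α) : Prop := ∃ c : ℂ, c ≠ 0 ∧ A = c • B

/-- The graph state of a simple graph on `Fin n`:
`|G⟩(x) = 2^{-n/2} (-1)^{#{edges both of whose endpoints i satisfy x i = 1}}`. -/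
def graphState {n : ℕ} (G : SimpleGraph (Fin n)) : QState n := fun x =>
  (((Real.sqrt 2)⁻¹ ^ n : ℝ) : ℂ) *
    (-1 : ℂ) ^ (Finset.univ.filter fun e : Sym2 (Fin n) =>
        e ∈ G.edgeSet ∧ ∀ i ∈ e, x i = 1).card

/-- The `k`-th tensor factor of the canonical stabilizer generator `S_(j)` of a graph state:
`X` on qubit `j`, `Z` on the neighbours of `j`, identity elsewhere. -/
def canonGenFactor {n : ℕ} (G : SimpleGraph (Fin n)) (j k : Fin n) : Mat2 :=
  if k = j then PX else if G.Adj j k then PZ else 1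

/-- The canonical stabilizer generator `S_(j)` of a graph state. -/
def canonGen {n : ℕ} (G : SimpleGraph (Fin n)) (j : Fin n) : MatQ n :=
  localOp (canonGenFactor G j)

/-- The stabilizer group `S_G` of a graph state. -/
def stabGroup {n : ℕ} (G : SimpleGraph (Fin n)) : Submonoid (MatQ n) :=
  Submonoid.closure (Set.range (canonGen G))

/-- An `n`-qubit operator is a local unitary if it is a tensor product of `2×2` unitaries. -/
def IsLocalUnitary {n : ℕ} (U : MatQ n) : Prop :=
  ∃ A : Fin n → Mat2, (∀ j, A j ∈ Matrix.unitaryGroup (Fin 2) ℂ) ∧ U = localOp A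

/-- The local unitary symmetry group `U_G` of the graph state of `G`. -/
def symUG {n : ℕ} (G : SimpleGraph (Fin n)) : Set (MatQ n) :=
  { U | IsLocalUnitary U ∧ ∃ c : ℂ, U.mulVec (graphState G) = c • graphState G }

/-- `|G⟩ ∈ T`: no element of `U_G` has a tensor factor proportional to an element of `C₁³`. -/
def inT {n : ℕ} (G : SimpleGraph (Fin n)) : Prop :=
  ∀ A : Fin n → Mat2, (∀ j, A j ∈ Matrix.unitaryGroup (Fin 2) ℂ) →
    localOp A ∈ symUG G → ∀ j, ¬ ∃ C : Mat2, IsC13 C ∧ PropTo (A j) C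

/-- Local complementation of a graph at a vertex `v`. -/
def localComp {V : Type*} (G : SimpleGraph V) (v : V) : SimpleGraph V where
  Adj a b := a ≠ b ∧ Xor' (G.Adj a b) (G.Adj v a ∧ G.Adj v b)
  symm := by
    refine ⟨fun a b h => ?_⟩
    obtain ⟨hab, h⟩ := h
    refine ⟨hab.symm, ?_⟩
    have h1 : G.Adj b a = G.Adj a b := propext (G.adj_comm b a)
    have h2 : (G.Adj v b ∧ G.Adj v a) = (G.Adj v a ∧ G.Adj v b) := propext and_comm
    rw [h1, h2]
    exact h
  loopless := by refine ⟨fun a h => ?_⟩; exact h.1 rfl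

/-- A vertex is a leaf up to local complementation if some finite sequence of local
complementations turns the graph into one in which it has exactly one neighbour. -/
def IsLeafUpToLC {n : ℕ} (G : SimpleGraph (Fin n)) (v : Fin n) : Prop :=
  ∃ l : List (Fin n), ∃! w, (l.foldl localComp G).Adj v w

/-- The generating set of leaf symmetries, for leaf-parent pairs, twins and connected twins. -/
def leafSymSet {n : ℕ} (G : SimpleGraph (Fin n)) : Set (MatQ n) :=
  { U | ∃ (α : ℝ) (l p : Fin n),
      (G.neighborSet l = {p} ∧
        U = localOp fun k => if k = l then uexp α PX else if k = p then uexp (-α) PZ else 1) ∨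
      (l ≠ p ∧ G.neighborSet l = G.neighborSet p ∧
        U = localOp fun k => if k = l then uexp α PX else if k = p then uexp (-α) PX else 1) ∨
      (G.Adj l p ∧ G.neighborSet l \ {p} = G.neighborSet p \ {l} ∧
        U = localOp fun k => if k = l then uexp α PY else if k = p then uexp (-α) PY else 1) }

/-- The group `L_G` generated by all leaf symmetries of `G`. -/
def LG {n : ℕ} (G : SimpleGraph (Fin n)) : Submonoid (MatQ n) :=
  Submonoid.closure (leafSymSet G)

/-- An `n`-qubit stabilizer state: a nonzero state `ψ` together with `n` independent, pairwise
commuting elements of the Pauli group generating a subgroup not containing `-1`, all of which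
stabilize `ψ`. -/
structure StabState (n : ℕ) where
  ψ : QState n
  g : Fin n → MatQ n
  ψ_ne : ψ ≠ 0
  g_mem : ∀ j, g j ∈ PN n
  g_comm : ∀ j k, Commute (g j) (g k)
  g_indep : ∀ s : Finset (Fin n),
    s.noncommProd g (fun a _ b _ _ => g_comm a b) = 1 → s = ∅
  neg_one_not : (-1 : MatQ n) ∉ Submonoid.closure (Set.range g)
  stabilizes : ∀ j, (g j).mulVec ψ = ψ

/-- The stabilizer group `S_ψ` of a stabilizer state. -/
def StabState.stab {n : ℕ} (s : StabState n) : Submonoid (MatQ n) :=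
  Submonoid.closure (Set.range s.g)

/-- `ψ` is a product state across the bipartition `(S, Sᶜ)` of the qubits. -/
def ProductAcross {n : ℕ} (ψ : QState n) (S : Set (Fin n)) : Prop :=
  ∃ (φ : (S → Fin 2) → ℂ) (χ : ((Sᶜ : Set (Fin n)) → Fin 2) → ℂ),
    ∀ x, ψ x = φ (fun j => x j.1) * χ (fun j => x j.1)

/-- A state is fully entangled if it is not a product across any nontrivial bipartition. -/
def FullyEntangled {n : ℕ} (ψ : QState n) : Prop :=
  ∀ S : Set (Fin n), S ≠ ∅ → S ≠ Set.univ → ¬ ProductAcross ψ S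

/-- The adjacency matrix of a graph over `𝔽₂`. -/
def adjMat {n : ℕ} (G : SimpleGraph (Fin n)) : Matrix (Fin n) (Fin n) (ZMod 2) :=
  Matrix.of fun i j => if G.Adj i j then 1 else 0


/-- No local symmetry of a (connected) graph state acts nontrivially on exactly one qubit. -/
theorem stmt11 {n : ℕ} (hn : 2 ≤ n) (G : SimpleGraph (Fin n)) (hconn : G.Connected)
    (j : Fin n) (Uj : Mat2) (hUj : IsUnit Uj) (c : ℂ)
    (h : (localOp fun k => if k = j then Uj else 1).mulVec (graphState G)
      = c • graphState G) :
    PropTo Uj (1 : Mat2) := by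
  classical
  -- find a neighbour p of j
  obtain ⟨p, hjp⟩ : ∃ p, G.Adj j p := by
    obtain ⟨k, hk⟩ := Fintype.exists_ne_of_one_lt_card (by simp; omega) j
    obtain ⟨w⟩ := hconn.preconnected j k
    cases w with
    | nil => exact absurd rfl hk
    | cons h' _ => exact ⟨_, h'⟩
  have hpj : p ≠ j := fun e => G.irrefl (e ▸ hjp)
  set C : ℂ := (((Real.sqrt 2)⁻¹ ^ n : ℝ) : ℂ) with hCdef
  have hC0 : C ≠ 0 := Complex.ofReal_ne_zero.mpr (by positivity)
  -- value of graph state when no edge is fully inside the support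
  have hval0 : ∀ x : Fin n → Fin 2, (∀ a b, G.Adj a b → ¬(x a = 1 ∧ x b = 1)) →
      graphState G x = C := by
    intro x hx
    have hfilt : (Finset.univ.filter fun e : Sym2 (Fin n) =>
        e ∈ G.edgeSet ∧ ∀ i ∈ e, x i = 1) = ∅ := by
      rw [Finset.filter_eq_empty_iff]
      intro e _
      induction e using Sym2.ind with
      | _ a b =>
        rintro ⟨he, hall⟩
        exact hx a b (G.mem_edgeSet.mp he)
          ⟨hall a (Sym2.mem_mk_left a b), hall b (Sym2.mem_mk_right a b)⟩
    rw [graphState, hfilt, Finset.card_empty, pow_zero, mul_one]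
  -- the four configurations
  set x00 : Fin n → Fin 2 := fun _ => 0 with hx00
  set xj : Fin n → Fin 2 := fun k => if k = j then 1 else 0 with hxj
  set xp : Fin n → Fin 2 := fun k => if k = p then 1 else 0 with hxp
  set xjp : Fin n → Fin 2 := fun k => if k = j ∨ k = p then 1 else 0 with hxjp
  have h01 : (0 : Fin 2) ≠ 1 := by decide
  have hv00 : graphState G x00 = C := by
    apply hval0; intro a b _ hab; exact h01 hab.1
  have hvj : graphState G xj = C := by
    apply hval0; intro a b hadj hab
    have ha : a = j := by by_contra h'; simp [hxj, h'] at hab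
    have hb : b = j := by by_contra h'; simp [hxj, h'] at hab
    exact G.irrefl (ha ▸ hb ▸ hadj)
  have hvp : graphState G xp = C := by
    apply hval0; intro a b hadj hab
    have ha : a = p := by by_contra h'; simp [hxp, h'] at hab
    have hb : b = p := by by_contra h'; simp [hxp, h'] at hab
    exact G.irrefl (ha ▸ hb ▸ hadj)
  have hvjp : graphState G xjp = -C := by
    have hfilt : (Finset.univ.filter fun e : Sym2 (Fin n) =>
        e ∈ G.edgeSet ∧ ∀ i ∈ e, xjp i = 1) = {s(j, p)} := by
      apply Finset.eq_singleton_iff_unique_mem.mpr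
      constructor
      · rw [Finset.mem_filter]
        refine ⟨Finset.mem_univ _, G.mem_edgeSet.mpr hjp, ?_⟩
        intro i hi
        rcases Sym2.mem_iff.mp hi with rfl | rfl <;> simp [hxjp]
      · intro e he
        rw [Finset.mem_filter] at he
        obtain ⟨-, he, hall⟩ := he
        induction e using Sym2.ind with
        | _ a b =>
          have hadj : G.Adj a b := G.mem_edgeSet.mp he
          have hne : a ≠ b := G.ne_of_adj hadj
          have ha : a = j ∨ a = p := by
            have := hall a (Sym2.mem_mk_left a b)
            by_contra hc
            push_neg at hc
            simp [hxjp, hc.1, hc.2] at this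
          have hb : b = j ∨ b = p := by
            have := hall b (Sym2.mem_mk_right a b)
            by_contra hc
            push_neg at hc
            simp [hxjp, hc.1, hc.2] at this
          rcases ha with rfl | rfl <;> rcases hb with rfl | rfl
          · exact absurd rfl hne
          · rfl
          · exact Sym2.eq_swap
          · exact absurd rfl hne
    rw [graphState, hfilt, Finset.card_singleton, pow_one]
    ring
  -- the key pointwise equation
  have key : ∀ x : Fin n → Fin 2,
      Uj (x j) 0 * graphState G (Function.update x j 0)
        + Uj (x j) 1 * graphState G (Function.update x j 1)
        = c * graphState G x := by
    intro x
    have hx := congrFun h x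
    rw [Pi.smul_apply, smul_eq_mul] at hx
    rw [← hx]
    have hrw : (localOp fun k => if k = j then Uj else 1).mulVec (graphState G) x
        = ∑ y : Fin n → Fin 2,
            (∏ k, (if k = j then Uj else 1) (x k) (y k)) * graphState G y := rfl
    rw [hrw]
    have hterm : ∀ b : Fin 2,
        (∏ k, (if k = j then Uj else 1) (x k) (Function.update x j b k)) = Uj (x j) b := by
      intro b
      rw [Finset.prod_eq_single j]
      · simp [Function.update_self]
      · intro k _ hk
        simp [hk, Function.update_of_ne hk, Matrix.one_apply]
      · simp
    have hne : Function.update x j 0 ≠ Function.update x j 1 := by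
      intro he
      have := congrFun he j
      simp [Function.update_self] at this
    have hsub : ({Function.update x j 0, Function.update x j 1} : Finset (Fin n → Fin 2))
        ⊆ Finset.univ := Finset.subset_univ _
    rw [← Finset.sum_subset hsub, Finset.sum_pair hne, hterm 0, hterm 1]
    intro y _ hy
    simp only [Finset.mem_insert, Finset.mem_singleton, not_or] at hy
    have fin2 : ∀ b : Fin 2, b = 0 ∨ b = 1 := by decide
    have : y ≠ Function.update x j (y j) := by
      rcases fin2 (y j) with h' | h' <;> rw [h']
      · exact hy.1
      · exact hy.2
    obtain ⟨k, hk⟩ := Function.ne_iff.mp this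
    have hkj : k ≠ j := by
      intro he; subst he; simp [Function.update_self] at hk
    have hxy : x k ≠ y k := by
      rw [Function.update_of_ne hkj] at hk; exact fun e => hk e.symm
    apply mul_eq_zero_of_left
    apply Finset.prod_eq_zero (Finset.mem_univ k)
    simp [hkj, Matrix.one_apply, hxy]
  -- updates of the configurations
  have u1 : Function.update x00 j 0 = x00 := by
    funext k; by_cases h' : k = j <;> simp [Function.update_apply, h', hx00]
  have u2 : Function.update x00 j 1 = xj := by
    funext k; by_cases h' : k = j <;> simp [Function.update_apply, h', hxj, hx00]
  have u3 : Function.update xp j 0 = xp := by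
    funext k; by_cases h' : k = j <;> simp [Function.update_apply, h', hxp, hpj.symm]
  have u4 : Function.update xp j 1 = xjp := by
    funext k
    by_cases h' : k = j
    · simp [Function.update_apply, h', hxjp]
    · simp [Function.update_apply, h', hxjp, hxp]
  have u5 : Function.update xj j 0 = x00 := by
    funext k; by_cases h' : k = j <;> simp [Function.update_apply, h', hx00, hxj]
  have u6 : Function.update xj j 1 = xj := by
    funext k; by_cases h' : k = j <;> simp [Function.update_apply, h', hxj]
  have u7 : Function.update xjp j 0 = xp := by
    funext k
    by_cases h' : k = j
    · subst h'; simp [Function.update_self, hxp, hpj.symm]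
    · simp [Function.update_apply, h', hxjp, hxp]
  have u8 : Function.update xjp j 1 = xjp := by
    funext k; by_cases h' : k = j <;> simp [Function.update_apply, h', hxjp]
  have hx00j : x00 j = 0 := rfl
  have hxpj : xp j = 0 := by simp [hxp, hpj.symm]
  have hxjj : xj j = 1 := by simp [hxj]
  have hxjpj : xjp j = 1 := by simp [hxjp]
  have e1 := key x00
  rw [hx00j, u1, u2, hv00, hvj] at e1
  have e2 := key xp
  rw [hxpj, u3, u4, hvp, hvjp] at e2
  have e3 := key xj
  rw [hxjj, u5, u6, hv00, hvj] at e3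
  have e4 := key xjp
  rw [hxjpj, u7, u8, hvp, hvjp] at e4
  have h00 : Uj 0 0 = c := by
    have := mul_right_cancel₀ hC0 (by linear_combination e1 + e2 : (Uj 0 0 + Uj 0 0) * C = (c + c) * C)
    linear_combination this / 2
  have h01e : Uj 0 1 = 0 := by
    have := mul_right_cancel₀ hC0 (by linear_combination e1 - e2 : (Uj 0 1 + Uj 0 1) * C = 0 * C)
    linear_combination this / 2
  have h11 : Uj 1 1 = c := by
    have := mul_right_cancel₀ hC0 (by linear_combination e3 - e4 : (Uj 1 1 + Uj 1 1) * C = (c + c) * C)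
    linear_combination this / 2
  have h10 : Uj 1 0 = 0 := by
    have := mul_right_cancel₀ hC0 (by linear_combination e3 + e4 : (Uj 1 0 + Uj 1 0) * C = 0 * C)
    linear_combination this / 2
  have hUeq : Uj = c • (1 : Mat2) := by
    ext i k
    fin_cases i <;> fin_cases k <;>
      simp [Matrix.one_apply, h00, h01e, h10, h11]
  refine ⟨c, ?_, hUeq⟩
  intro hc
  rw [hc, zero_smul] at hUeq
  rw [hUeq] at hUj
  exact not_isUnit_zero hUj

end
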